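/- Let G be a tripartite graph with parts A, B, C. Construct the bipartite graph H from G by keeping only the edges between A and C and between B and C, and adding vertices s (adjacent to all of A) and t (adjacent to all of B). For an edge (a,b) ∈ E(G) ∩ (A × B), let S = C ∪ {s, t, a, b}. Then s and t are connected in the subgraph of H induced by S if and only if there exists a vertex c ∈ C such that (a, b, c) is a triangle in G. -/

import Mathlib

/-!
Inside the induced graph on `S`, the only vertices of `A ∪ B` are `a` and `b`, and `C` is
independent in `H`. Hence if no `c ∈ C` is adjacent to both `a` and `b`, the set
`{s, a} ∪ (N(a) ∩ C)` is closed under adjacency and does not contain `t`. Conversely a common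
neighbour `c` gives the path `s – a – c – b – t`.
-/

open Sum

namespace SimpleGraph

variable {V : Type*}

/-- The graph `H`, with apices `s = inr false` and `t = inr true`. -/
def apexGraph (G : SimpleGraph V) (A B C : Set V) : SimpleGraph (V ⊕ Bool) :=
  fromRel fun p q =>
    (∃ u v, G.Adj u v ∧ ((u ∈ A ∧ v ∈ C) ∨ (u ∈ B ∧ v ∈ C)) ∧ p = inl u ∧ q = inl v) ∨
    (∃ u, u ∈ A ∧ p = inr false ∧ q = inl u) ∨
    (∃ u, u ∈ B ∧ p = inl u ∧ q = inr true)

def probeSet (C : Set V) (a b : V) : Set (V ⊕ Bool) :=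
  {w | w = inr false ∨ w = inr true ∨ w = inl a ∨ w = inl b ∨ ∃ c ∈ C, w = inl c}

variable {G : SimpleGraph V} {A B C : Set V}

@[simp] lemma apexGraph_adj_inl_inl {u v : V} :
    (G.apexGraph A B C).Adj (inl u) (inl v) ↔
      G.Adj u v ∧ (u ∈ A ∪ B ∧ v ∈ C ∨ u ∈ C ∧ v ∈ A ∪ B) := by
  simp only [apexGraph, fromRel_adj, ne_eq, inl.injEq, reduceCtorEq, false_and, and_false]
  grind [Adj.ne, Adj.symm]

@[simp] lemma apexGraph_adj_inl_inr {u : V} {i : Bool} :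
    (G.apexGraph A B C).Adj (inl u) (inr i) ↔ u ∈ cond i B A := by
  cases i <;> simp [apexGraph]

@[simp] lemma apexGraph_adj_inr_inl {u : V} {i : Bool} :
    (G.apexGraph A B C).Adj (inr i) (inl u) ↔ u ∈ cond i B A := by
  rw [adj_comm, apexGraph_adj_inl_inr]

@[simp] lemma apexGraph_not_adj_inr_inr {i j : Bool} :
    ¬ (G.apexGraph A B C).Adj (inr i) (inr j) := by
  simp [apexGraph]

lemma Reachable.mem_of_forall_adj {u v : V} (h : G.Reachable u v)
    {T : Set V} (hT : ∀ x y, G.Adj x y → x ∈ T → y ∈ T) (hu : u ∈ T) : v ∈ T := by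
  obtain ⟨w⟩ := h
  induction w with
  | nil => exact hu
  | cons hadj _ ih => exact ih (hT _ _ hadj hu)

variable {a b : V}

lemma apexGraph_exists_triangle_of_reachable (hAB : Disjoint A B) (hAC : Disjoint A C)
    (hBC : Disjoint B C) (ha : a ∈ A) (hb : b ∈ B)
    (h : ((G.apexGraph A B C).induce (probeSet C a b)).Reachable
      ⟨inr false, Or.inl rfl⟩ ⟨inr true, Or.inr (Or.inl rfl)⟩) :
    ∃ c ∈ C, G.Adj a c ∧ G.Adj b c := by
  by_contra! hno
  have haB : a ∉ B := hAB.notMem_of_mem_left ha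
  have haC : a ∉ C := hAC.notMem_of_mem_left ha
  have hbA : b ∉ A := hAB.notMem_of_mem_right hb
  have hbC : b ∉ C := hBC.notMem_of_mem_left hb
  have hCA : ∀ c ∈ C, c ∉ A := fun c hc => hAC.notMem_of_mem_right hc
  have hCB : ∀ c ∈ C, c ∉ B := fun c hc => hBC.notMem_of_mem_right hc
  let T : Set (V ⊕ Bool) := {inr false, inl a} ∪ inl '' {c | c ∈ C ∧ G.Adj a c}
  have hT : ∀ x y : probeSet C a b, (G.apexGraph A B C).Adj x y → x.1 ∈ T → y.1 ∈ T := by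
    rintro ⟨x, _⟩ ⟨y, hy⟩ hxy hx
    rcases hy with rfl | rfl | rfl | rfl | ⟨c', hc', rfl⟩ <;>
      rcases hx with (rfl | rfl) | ⟨c, ⟨hc, hac⟩, rfl⟩ <;>
      simp_all [T, G.adj_comm]
  simpa [T] using h.mem_of_forall_adj (T := Subtype.val ⁻¹' T) hT (by simp [T])

lemma apexGraph_reachable_of_triangle (ha : a ∈ A) (hb : b ∈ B) {c : V} (hc : c ∈ C)
    (hac : G.Adj a c) (hbc : G.Adj b c) :
    ((G.apexGraph A B C).induce (probeSet C a b)).Reachable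
      ⟨inr false, Or.inl rfl⟩ ⟨inr true, Or.inr (Or.inl rfl)⟩ := by
  have mem_a : inl a ∈ probeSet C a b := by simp [probeSet]
  have mem_b : inl b ∈ probeSet C a b := by simp [probeSet]
  have mem_c : inl c ∈ probeSet C a b := by simp [probeSet, hc]
  refine .trans (v := ⟨inl a, mem_a⟩) (Adj.reachable ?_) <|
    .trans (v := ⟨inl c, mem_c⟩) (Adj.reachable ?_) <|
    .trans (v := ⟨inl b, mem_b⟩) (Adj.reachable ?_) (Adj.reachable ?_) <;>
    simp [ha, hb, hc, hac, hbc.symm]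

end SimpleGraph

theorem stmt_5 {V : Type*} (G : SimpleGraph V) (A B C : Set V)
    (hAB : Disjoint A B) (hAC : Disjoint A C) (hBC : Disjoint B C)
    (a b : V) (ha : a ∈ A) (hb : b ∈ B) :
    let H : SimpleGraph (V ⊕ Bool) := SimpleGraph.fromRel (fun p q =>
      (∃ u v, G.Adj u v ∧ ((u ∈ A ∧ v ∈ C) ∨ (u ∈ B ∧ v ∈ C)) ∧
          p = Sum.inl u ∧ q = Sum.inl v) ∨
      (∃ u, u ∈ A ∧ p = Sum.inr false ∧ q = Sum.inl u) ∨
      (∃ u, u ∈ B ∧ p = Sum.inl u ∧ q = Sum.inr true))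
    let S : Set (V ⊕ Bool) := {w | w = Sum.inr false ∨ w = Sum.inr true ∨
      w = Sum.inl a ∨ w = Sum.inl b ∨ ∃ c ∈ C, w = Sum.inl c}
    (H.induce S).Reachable ⟨Sum.inr false, Or.inl rfl⟩ ⟨Sum.inr true, Or.inr (Or.inl rfl)⟩ ↔
      ∃ c ∈ C, G.Adj a c ∧ G.Adj b c :=
  ⟨SimpleGraph.apexGraph_exists_triangle_of_reachable hAB hAC hBC ha hb,
    fun ⟨_, hc, hac, hbc⟩ => SimpleGraph.apexGraph_reachable_of_triangle ha hb hc hac hbc⟩
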